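/- For integers n ≥ 1 define ψ_n(p) = 2^{1−n} ∑_{k=0}^n C(n,k) (k/n)^{1/p} − 2^{1/p} for p ≥ 1. Then for every integer n > 1, ψ_n has a unique root p_n in the interval (2, ∞); moreover the sequence (p_n) is strictly monotonically decreasing and converges to 2 as n → ∞. -/

import Mathlib

/-!
With `t = 1/p` and `f_t(x) = x^t` we have `ψ_n(p) = 2 B_n(f_t)(1/2) - 2^t`. For `0 < t < 1` the
function `f_t` is strictly concave, and Pascal's rule writes each value entering `B_{n+1}(f_t)(1/2)`
as a convex combination of two neighbouring values entering `B_n(f_t)(1/2)`; so `B_n(f_t)(1/2)`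
increases strictly in `n`, towards `f_t(1/2) = 2^{-t}` by Bernstein's theorem. Consequently
`ψ_n(2) < 0`, `ψ_n < ψ_{n+1}` on `(1, ∞)`, and `ψ_n(p) → 2^{1-t} - 2^t > 0` for `p > 2`. As `ψ_n`
increases strictly in `p` and tends to `1 - 2^{1-n} > 0` at infinity, it has a unique root
`p_n > 2`, and these facts force `p_n` to decrease to `2`.
-/

/-- `ψ_n(p) = 2^{1−n} ∑_{k=0}^n C(n,k) (k/n)^{1/p} − 2^{1/p}`. -/
noncomputable def psiN (n : ℕ) (p : ℝ) : ℝ :=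
  (2 : ℝ) ^ ((1 : ℝ) - (n : ℝ)) *
      ∑ k ∈ Finset.range (n + 1), (n.choose k : ℝ) * ((k : ℝ) / (n : ℝ)) ^ (1 / p)
    - (2 : ℝ) ^ (1 / p)

open Finset Real Filter Topology

/-- `binomSum n f / 2 ^ n` is the Bernstein polynomial `B_n(f)` evaluated at `1/2`. -/
noncomputable def binomSum (n : ℕ) (f : ℝ → ℝ) : ℝ :=
  ∑ k ∈ range (n + 1), (n.choose k : ℝ) * f (k / n)

theorem binomSum_eq_add_sum (n : ℕ) (f : ℝ → ℝ) :
    binomSum n f = f 0 + ∑ k ∈ range n, (n.choose (k + 1) : ℝ) * f ((k + 1 : ℕ) / n) := by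
  rw [binomSum, sum_range_succ', add_comm]
  simp

theorem choose_mul_add_choose_succ_mul_lt {f : ℝ → ℝ}
    (hf : StrictConcaveOn ℝ (Set.Icc 0 1) f) {n k : ℕ} (hk : k < n) :
    (n.choose k : ℝ) * f (k / n) + (n.choose (k + 1) : ℝ) * f ((k + 1 : ℕ) / n) <
      ((n + 1).choose (k + 1) : ℝ) * f ((k + 1 : ℕ) / (n + 1 : ℕ)) := by
  have hn : (0 : ℝ) < n := by exact_mod_cast hk.trans_le' k.zero_le
  have hkn : (k : ℝ) < n := by exact_mod_cast hk
  set N : ℝ := ((n + 1).choose (k + 1) : ℝ) with hN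
  set a : ℝ := (k + 1) / (n + 1) with ha
  have hN_pos : 0 < N := by rw [hN]; exact_mod_cast Nat.choose_pos (by omega)
  -- `C(n,k) / C(n+1,k+1) = (k+1)/(n+1)`, and Pascal's rule gives the complementary weight
  have hC : (n.choose k : ℝ) = a * N := by
    have : ((n : ℝ) + 1) * n.choose k = N * (k + 1) := by
      rw [hN]; exact_mod_cast Nat.add_one_mul_choose_eq n k
    rw [ha]
    field_simp
    linarith
  have hC' : (n.choose (k + 1) : ℝ) = (1 - a) * N := by
    have : N = n.choose k + n.choose (k + 1) := by
      rw [hN]; exact_mod_cast Nat.choose_succ_succ' n k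
    linarith
  have hx : (k / n : ℝ) ∈ Set.Icc 0 1 := ⟨by positivity, (div_le_one hn).2 hkn.le⟩
  have hy : ((k + 1 : ℕ) / n : ℝ) ∈ Set.Icc 0 1 :=
    ⟨by positivity, (div_le_one hn).2 (by exact_mod_cast hk)⟩
  have hxy : (k / n : ℝ) ≠ (k + 1 : ℕ) / n := by
    rw [Ne, div_left_inj' hn.ne']; norm_cast; omega
  have ha_pos : 0 < a := by positivity
  have ha_lt : 0 < 1 - a := by rw [sub_pos, div_lt_one (by positivity)]; linarith
  have hmid : a • (k / n : ℝ) + (1 - a) • ((k + 1 : ℕ) / n : ℝ) = (k + 1 : ℕ) / (n + 1 : ℕ) := by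
    rw [ha, smul_eq_mul, smul_eq_mul]; push_cast; field_simp; ring
  have hconcave := hf.2 hx hy hxy ha_pos ha_lt (by ring)
  rw [hmid, smul_eq_mul, smul_eq_mul] at hconcave
  rw [hC, hC']
  nlinarith

theorem two_mul_binomSum_lt_binomSum_succ {f : ℝ → ℝ}
    (hf : StrictConcaveOn ℝ (Set.Icc 0 1) f) {n : ℕ} (hn : 0 < n) :
    2 * binomSum n f < binomSum (n + 1) f := by
  have hpairs : ∑ k ∈ range n,
      ((n.choose k : ℝ) * f (k / n) + (n.choose (k + 1) : ℝ) * f ((k + 1 : ℕ) / n)) <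
      ∑ k ∈ range n, ((n + 1).choose (k + 1) : ℝ) * f ((k + 1 : ℕ) / (n + 1 : ℕ)) :=
    sum_lt_sum_of_nonempty (nonempty_range_iff.2 hn.ne')
      fun k hk => choose_mul_add_choose_succ_mul_lt hf (mem_range.1 hk)
  have hlow : binomSum n f = ∑ k ∈ range n, (n.choose k : ℝ) * f (k / n) + f 1 := by
    rw [binomSum, sum_range_succ]; simp [hn.ne']
  have hhigh : binomSum (n + 1) f = f 0 +
      ∑ k ∈ range n, ((n + 1).choose (k + 1) : ℝ) * f ((k + 1 : ℕ) / (n + 1 : ℕ)) + f 1 := by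
    rw [binomSum_eq_add_sum, sum_range_succ, add_assoc]
    simp [div_self (by positivity : (n : ℝ) + 1 ≠ 0)]
  rw [sum_add_distrib] at hpairs
  linarith [binomSum_eq_add_sum n f]

theorem binomSum_div_two_pow_lt_succ {f : ℝ → ℝ} (hf : StrictConcaveOn ℝ (Set.Icc 0 1) f)
    {n : ℕ} (hn : 0 < n) : binomSum n f / 2 ^ n < binomSum (n + 1) f / 2 ^ (n + 1) := by
  rw [pow_succ, ← div_div, lt_div_iff₀ two_pos, div_mul_eq_mul_div, mul_comm,
    div_lt_div_iff_of_pos_right (by positivity)]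
  exact two_mul_binomSum_lt_binomSum_succ hf hn

theorem tendsto_binomSum_div_two_pow {f : ℝ → ℝ} (hf : ContinuousOn f (Set.Icc 0 1)) :
    Tendsto (fun n => binomSum n f / 2 ^ n) atTop (𝓝 (f (1 / 2))) := by
  let g : C(unitInterval, ℝ) := ⟨Set.domRestrict _ f, hf.domRestrict⟩
  let half : unitInterval := ⟨1 / 2, by norm_num, by norm_num⟩
  have hhalf : ∀ n, bernsteinApproximation n g half = binomSum n f / 2 ^ n := fun n => by
    rw [bernsteinApproximation.apply, binomSum, sum_div, ← Fin.sum_univ_eq_sum_range]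
    refine sum_congr rfl fun k _ => ?_
    have hweight : ((1 : ℝ) / 2) ^ (k : ℕ) * (1 - 1 / 2) ^ (n - k) = 1 / 2 ^ n := by
      rw [show (1 : ℝ) - 1 / 2 = 1 / 2 by norm_num, ← pow_add, Nat.add_sub_cancel' k.is_le,
        one_div_pow]
    have hgz : g (bernstein.z k) = f (k / n) := rfl
    rw [bernstein_apply, smul_eq_mul, mul_assoc _ ((half : ℝ) ^ _), hweight, hgz]
    ring
  exact (((continuous_eval_const half).tendsto g).comp
    (bernsteinApproximation_uniform g)).congr hhalf

theorem binomSum_div_two_pow_lt {f : ℝ → ℝ} (hc : ContinuousOn f (Set.Icc 0 1))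
    (hf : StrictConcaveOn ℝ (Set.Icc 0 1) f) {n : ℕ} (hn : 0 < n) :
    binomSum n f / 2 ^ n < f (1 / 2) := by
  have hmono : Monotone fun m => binomSum (m + 1) f / 2 ^ (m + 1) :=
    monotone_nat_of_le_succ fun m => (binomSum_div_two_pow_lt_succ hf m.succ_pos).le
  have hlim := (tendsto_add_atTop_iff_nat 1).2 (tendsto_binomSum_div_two_pow hc)
  exact (binomSum_div_two_pow_lt_succ hf hn).trans_le (hmono.ge_of_tendsto hlim n)

theorem binomSum_rpow_antitoneOn (n : ℕ) :
    AntitoneOn (fun t : ℝ => binomSum n (· ^ t)) (Set.Ici 0) :=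
  fun s hs t _ hst => sum_le_sum fun k hk => by
    have hkn : k ≤ n := Nat.lt_succ_iff.1 (mem_range.1 hk)
    gcongr
    exact rpow_le_rpow_of_exponent_ge' (by positivity)
      (div_le_one_of_le₀ (by exact_mod_cast hkn) n.cast_nonneg) hs hst

theorem tendsto_binomSum_rpow_nhdsGT_zero (n : ℕ) :
    Tendsto (fun t : ℝ => binomSum n (· ^ t)) (𝓝[>] 0) (𝓝 (2 ^ n - 1)) := by
  have hsum : ∑ k ∈ range n, (n.choose (k + 1) : ℝ) = 2 ^ n - 1 := by
    have := Nat.sum_range_choose n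
    rw [sum_range_succ', Nat.choose_zero_right] at this
    rw [eq_sub_iff_add_eq]
    exact_mod_cast this
  have hterms : Tendsto
      (fun t : ℝ => ∑ k ∈ range n, (n.choose (k + 1) : ℝ) * (((k + 1 : ℕ) : ℝ) / n) ^ t)
      (𝓝[>] 0) (𝓝 (2 ^ n - 1)) := by
    rw [← hsum]
    refine tendsto_finsetSum _ fun k hk => ?_
    have hc : (((k + 1 : ℕ) : ℝ) / n) ≠ 0 := by
      have : (0 : ℝ) < n := by exact_mod_cast (mem_range.1 hk).trans_le' k.zero_le
      positivity
    simpa using ((continuousAt_const_rpow hc).tendsto.const_mul (n.choose (k + 1) : ℝ)).mono_left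
      (nhdsWithin_le_nhds (a := (0 : ℝ)))
  refine (tendsto_congr' ?_).2 hterms
  filter_upwards [self_mem_nhdsWithin] with t ht
  rw [binomSum_eq_add_sum, zero_rpow (ne_of_gt ht), zero_add]

theorem strictConcaveOn_rpow_Icc {t : ℝ} (ht₀ : 0 < t) (ht₁ : t < 1) :
    StrictConcaveOn ℝ (Set.Icc 0 1) (· ^ t : ℝ → ℝ) :=
  (strictConcaveOn_rpow ht₀ ht₁).subset Set.Icc_subset_Ici_self (convex_Icc 0 1)

theorem two_mul_half_rpow (t : ℝ) : 2 * (1 / 2 : ℝ) ^ t = 2 ^ (1 - t) := by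
  rw [div_rpow zero_le_one zero_le_two, one_rpow, rpow_sub two_pos, rpow_one, mul_one_div]

theorem continuousOn_rpow_one_div (c : ℝ) :
    ContinuousOn (fun p : ℝ => c ^ (1 / p)) (Set.Ioi 0) :=
  fun _ (hp : 0 < _) => ((continuousAt_const_rpow' (one_div_pos.2 hp).ne').comp
    (continuousAt_const.div continuousAt_id hp.ne')).continuousWithinAt

theorem psiN_eq (n : ℕ) (p : ℝ) :
    psiN n p = 2 * (binomSum n (· ^ (1 / p)) / 2 ^ n) - 2 ^ (1 / p) := by
  rw [psiN, rpow_sub two_pos, rpow_one, rpow_natCast, binomSum]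
  ring

theorem psiN_strictMonoOn (n : ℕ) : StrictMonoOn (psiN n) (Set.Ioi 0) := by
  intro p (hp : 0 < p) q (hq : 0 < q) hpq
  have hinv : 1 / q < 1 / p := one_div_lt_one_div_of_lt hp hpq
  have hsum := binomSum_rpow_antitoneOn n (Set.mem_Ici.2 (by positivity : (0 : ℝ) ≤ 1 / q))
    (Set.mem_Ici.2 (by positivity : (0 : ℝ) ≤ 1 / p)) hinv.le
  have hpow : (2 : ℝ) ^ (1 / q) < 2 ^ (1 / p) := rpow_lt_rpow_of_exponent_lt one_lt_two hinv
  rw [psiN_eq, psiN_eq]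
  linarith [div_le_div_of_nonneg_right hsum (by positivity : (0 : ℝ) ≤ 2 ^ n)]

theorem lt_of_psiN_eq_zero_of_pos {n : ℕ} {p q : ℝ} (hp : 0 < p) (hq : 0 < q)
    (hp0 : psiN n p = 0) (hq0 : 0 < psiN n q) : p < q :=
  ((psiN_strictMonoOn n).lt_iff_lt hp hq).1 (hp0 ▸ hq0)

theorem continuousOn_psiN (n : ℕ) : ContinuousOn (psiN n) (Set.Ioi 0) :=
  .sub (continuousOn_const.mul (continuousOn_finsetSum _ fun _ _ =>
    continuousOn_const.mul (continuousOn_rpow_one_div _))) (continuousOn_rpow_one_div 2)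

theorem psiN_two_neg {n : ℕ} (hn : 0 < n) : psiN n 2 < 0 := by
  have h := binomSum_div_two_pow_lt (continuous_rpow_const one_half_pos.le).continuousOn
    (strictConcaveOn_rpow_Icc one_half_pos one_half_lt_one) hn
  rw [psiN_eq, sub_neg]
  calc 2 * (binomSum n (· ^ (1 / 2 : ℝ)) / 2 ^ n) < 2 * (1 / 2 : ℝ) ^ (1 / 2 : ℝ) := by gcongr
    _ = 2 ^ (1 / 2 : ℝ) := by rw [two_mul_half_rpow]; norm_num

theorem eventually_psiN_pos_atTop {n : ℕ} (hn : 2 ≤ n) : ∀ᶠ p in atTop, 0 < psiN n p := by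
  have hinv : Tendsto (fun p : ℝ => 1 / p) atTop (𝓝[>] 0) := by
    simpa only [one_div] using tendsto_inv_atTop_nhdsGT_zero
  have hsum := (((tendsto_binomSum_rpow_nhdsGT_zero n).comp hinv).div_const (2 ^ n)).const_mul 2
  have hpow := (continuousAt_const_rpow two_ne_zero).tendsto.comp
    (hinv.mono_right nhdsWithin_le_nhds)
  have hpos : 0 < 2 * ((2 ^ n - 1) / 2 ^ n) - (2 : ℝ) ^ (0 : ℝ) := by
    have : (4 : ℝ) ≤ 2 ^ n := by
      calc (4 : ℝ) = 2 ^ 2 := by norm_num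
        _ ≤ 2 ^ n := pow_le_pow_right₀ one_le_two hn
    rw [rpow_zero, sub_pos, mul_div_assoc', lt_div_iff₀ (by positivity)]
    linarith
  filter_upwards [(hsum.sub hpow).eventually (eventually_gt_nhds hpos)] with p hp
  rwa [psiN_eq]

theorem exists_psiN_eq_zero {n : ℕ} (hn : 2 ≤ n) : ∃ p, 2 < p ∧ psiN n p = 0 := by
  obtain ⟨M, hM, hM2⟩ := ((eventually_psiN_pos_atTop hn).and (eventually_gt_atTop 2)).exists
  obtain ⟨p, hp, hp0⟩ := intermediate_value_Ioo hM2.le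
    ((continuousOn_psiN n).mono fun x hx => two_pos.trans_le hx.1)
    ⟨psiN_two_neg (by omega), hM⟩
  exact ⟨p, hp.1, hp0⟩

theorem psiN_lt_psiN_succ {n : ℕ} (hn : 0 < n) {p : ℝ} (hp : 1 < p) :
    psiN n p < psiN (n + 1) p := by
  have ht₀ : 0 < 1 / p := by positivity
  have ht₁ : 1 / p < 1 := (div_lt_one (by positivity)).2 hp
  rw [psiN_eq, psiN_eq]
  linarith [binomSum_div_two_pow_lt_succ (strictConcaveOn_rpow_Icc ht₀ ht₁) hn]

theorem eventually_psiN_pos {p : ℝ} (hp : 2 < p) : ∀ᶠ n in atTop, 0 < psiN n p := by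
  have ht₀ : 0 < 1 / p := by positivity
  have hlim :=
    (tendsto_binomSum_div_two_pow (continuous_rpow_const ht₀.le).continuousOn).const_mul 2
  have hpos : 0 < 2 * (1 / 2 : ℝ) ^ (1 / p) - 2 ^ (1 / p) := by
    rw [two_mul_half_rpow, sub_pos, rpow_lt_rpow_left_iff one_lt_two]
    have : 1 / p < 1 / 2 := one_div_lt_one_div_of_lt two_pos hp
    linarith
  filter_upwards [(hlim.sub_const (2 ^ (1 / p))).eventually (eventually_gt_nhds hpos)]
    with n hn
  rwa [psiN_eq]

theorem stmt7 :
    ∃ pn : ℕ → ℝ,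
      (∀ n : ℕ, 2 ≤ n →
        pn n ∈ Set.Ioi (2 : ℝ) ∧ psiN n (pn n) = 0 ∧
          ∀ q ∈ Set.Ioi (2 : ℝ), psiN n q = 0 → q = pn n) ∧
      (∀ n : ℕ, 2 ≤ n → pn (n + 1) < pn n) ∧
      Filter.Tendsto pn Filter.atTop (nhds 2) := by
  choose! pn hpn2 hpn0 using fun n (hn : 2 ≤ n) => exists_psiN_eq_zero hn
  have hpos : ∀ n, 2 ≤ n → 0 < pn n := fun n hn => two_pos.trans (hpn2 n hn)
  refine ⟨pn, fun n hn => ⟨hpn2 n hn, hpn0 n hn, fun q hq hq0 => ?_⟩, fun n hn => ?_, ?_⟩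
  · exact (psiN_strictMonoOn n).injOn (two_pos.trans (Set.mem_Ioi.1 hq)) (hpos n hn)
      (hq0.trans (hpn0 n hn).symm)
  · refine lt_of_psiN_eq_zero_of_pos (hpos _ (by omega)) (hpos n hn) (hpn0 _ (by omega)) ?_
    rw [← hpn0 n hn]
    exact psiN_lt_psiN_succ (by omega) (one_lt_two.trans (hpn2 n hn))
  · refine tendsto_order.2 ⟨fun a ha => ?_, fun b hb => ?_⟩
    · filter_upwards [eventually_ge_atTop 2] with n hn
      exact ha.trans (hpn2 n hn)
    · filter_upwards [eventually_psiN_pos hb, eventually_ge_atTop 2] with n hbn hn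
      exact lt_of_psiN_eq_zero_of_pos (hpos n hn) (two_pos.trans hb) (hpn0 n hn) hbn
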